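/- arXiv:2309.16370 — 4 statements merged into one kernel-verified Lean document; each statement's English description precedes it below -/
import Mathlib

section
/- Let g be a restricted Lie algebra over a field K of characteristic 2, with 2-operation x ↦ x^[2] satisfying [x^[2], y] = [x,[x,y]], (ax)^[2] = a² x^[2], and (x+y)^[2] = x^[2] + y^[2] + [x,y]. Then the queerification q(g) := g ⊕ Π(g), with even part g, odd part Π(g), bracket [x, Π(y)] := Π([x,y]) for x,y ∈ g, bracket of two odd elements [Π(x), Π(y)] := [x,y], and squaring (Π(x))² := x^[2], is a Lie superalgebra in characteristic 2: the squaring satisfies (a·Π(x))² = a²(Π(x))², the map (u,v) ↦ (u+v)² − u² − v² on odd elements is bilinear and equals the bracket, and the Jacobi identities [u², y] = [u, [u, y]] and [u², u] = 0 hold for all odd u and all y. -/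
/-- The queerification `q(g) = g ⊕ Π(g)` of a restricted Lie algebra `g = L` in
characteristic 2 is a Lie superalgebra.  We model `q(g)` as `L × L`, the even part being
`{(x,0)}` and the odd part `Π(L) = {(0,u)}` (embedded by `ι`); `B` is the bracket,
`Sq` the squaring of odd elements. -/
theorem queerification_is_lie_superalgebra
    {K : Type*} [Field K] [CharP K 2]
    {L : Type*} [LieRing L] [LieAlgebra K L]
    (sq : L → L)
    (h1 : ∀ x y : L, ⁅sq x, y⁆ = ⁅x, ⁅x, y⁆⁆)
    (h2 : ∀ (a : K) (x : L), sq (a • x) = (a * a) • sq x)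
    (h3 : ∀ x y : L, sq (x + y) = sq x + sq y + ⁅x, y⁆)
    (B : L × L → L × L → L × L)
    (hB : ∀ z w : L × L, B z w = (⁅z.1, w.1⁆ + ⁅z.2, w.2⁆, ⁅z.1, w.2⁆ + ⁅z.2, w.1⁆))
    (ι : L → L × L) (hι : ∀ u : L, ι u = ((0 : L), u))
    (Sq : L → L × L) (hSq : ∀ u : L, Sq u = (sq u, (0 : L))) :
    -- the squaring satisfies (a • Π(x))² = a² (Π(x))²
    (∀ (a : K) (u : L), Sq (a • u) = (a * a) • Sq u) ∧
    -- the polarization (u,v) ↦ (u+v)² − u² − v² equals the bracket of odd elements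
    (∀ u v : L, Sq (u + v) - Sq u - Sq v = B (ι u) (ι v)) ∧
    -- and it is bilinear
    (∀ u v w : L, Sq (u + v + w) - Sq (u + v) - Sq w =
        (Sq (u + w) - Sq u - Sq w) + (Sq (v + w) - Sq v - Sq w)) ∧
    (∀ (a : K) (u v : L), Sq (a • u + v) - Sq (a • u) - Sq v =
        a • (Sq (u + v) - Sq u - Sq v)) ∧
    -- Jacobi identity [u², y] = [u, [u, y]] for odd u and arbitrary y
    (∀ (u : L) (y : L × L), B (Sq u) y = B (ι u) (B (ι u) y)) ∧
    -- [u², u] = 0 for odd u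
    (∀ u : L, B (Sq u) (ι u) = 0) := by
  have two : ∀ x : L, x + x = 0 := by
    intro x
    have h : (2 : K) • x = 0 := by
      rw [show (2 : K) = 0 from CharP.cast_eq_zero K 2, zero_smul]
    rwa [two_smul] at h
  have pol : ∀ u v : L, Sq (u + v) - Sq u - Sq v = (⁅u, v⁆, 0) := by
    intro u v
    rw [hSq, hSq, hSq, h3]
    ext
    · show sq u + sq v + ⁅u, v⁆ - sq u - sq v = ⁅u, v⁆
      abel
    · show (0 : L) - 0 - 0 = 0
      simp
  refine ⟨?_, ?_, ?_, ?_, ?_, ?_⟩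
  · intro a u
    rw [hSq, hSq, h2, Prod.smul_mk, smul_zero]
  · intro u v
    rw [pol, hB, hι, hι]
    simp
  · intro u v w
    rw [pol, pol, pol]
    ext
    · show ⁅u + v, w⁆ = ⁅u, w⁆ + ⁅v, w⁆
      rw [add_lie]
    · show (0 : L) = 0 + 0
      simp
  · intro a u v
    rw [pol, pol]
    ext
    · show ⁅a • u, v⁆ = a • ⁅u, v⁆
      rw [smul_lie]
    · show (0 : L) = a • 0
      simp
  · intro u y
    rw [hSq, hι, hB, hB, hB]
    ext <;> simp [h1]
  · intro u
    rw [hSq, hι, hB]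
    ext
    · simp
    · show ⁅sq u, u⁆ + ⁅(0 : L), (0 : L)⁆ = 0
      simp [h1]
end

section
/- Let g be a simple restricted Lie algebra over a field of characteristic 2 (g has no nonzero proper ideals as a Lie algebra, dim g > 1). Then the queerification q(g) = g ⊕ Π(g) is a simple Lie superalgebra: its only homogeneous ideals that are closed under the squaring are 0 and q(g). -/
/-- If `g = L` is a simple restricted Lie algebra over a field of characteristic 2, then
its queerification `q(g) = g ⊕ Π(g)` (modelled as `L × L`, even part `{(x,0)}`, odd part
`{(0,u)}`, with bracket `[(x,u),(y,v)] = ([x,y]+[u,v], [x,v]+[u,y])` and squaring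
`(0,u)² = (sq u, 0)`) is a simple Lie superalgebra: every parity-homogeneous ideal closed
under the squaring is `0` or everything. -/
theorem queerification_is_simple
    {K : Type*} [Field K] [CharP K 2]
    {L : Type*} [LieRing L] [LieAlgebra K L] [LieAlgebra.IsSimple K L]
    (sq : L → L)
    (h1 : ∀ x y : L, ⁅sq x, y⁆ = ⁅x, ⁅x, y⁆⁆)
    (h2 : ∀ (a : K) (x : L), sq (a • x) = (a * a) • sq x)
    (h3 : ∀ x y : L, sq (x + y) = sq x + sq y + ⁅x, y⁆)
    (I : Submodule K (L × L))
    -- I is homogeneous with respect to parity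
    (hhom : ∀ z ∈ I, ((z.1, (0 : L)) ∈ I ∧ ((0 : L), z.2) ∈ I))
    -- I is closed under brackets with arbitrary elements
    (hbr : ∀ z ∈ I, ∀ w : L × L,
        ((⁅w.1, z.1⁆ + ⁅w.2, z.2⁆, ⁅w.1, z.2⁆ + ⁅w.2, z.1⁆) : L × L) ∈ I)
    -- I is closed under the squaring of its odd part
    (hsq : ∀ u : L, ((0 : L), u) ∈ I → ((sq u, (0 : L)) : L × L) ∈ I) :
    I = ⊥ ∨ I = ⊤ := by
  classical
  -- the even part of I, as a Lie ideal of L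
  let J0 : LieIdeal K L :=
    { I.comap (LinearMap.inl K L L) with
      lie_mem := by
        intro y m hm
        have := hbr (m, 0) hm (y, 0)
        simpa using this }
  -- the odd part of I, as a Lie ideal of L
  let J1 : LieIdeal K L :=
    { I.comap (LinearMap.inr K L L) with
      lie_mem := by
        intro y m hm
        have := hbr (0, m) hm (y, 0)
        simpa using this }
  have hJ0mem : ∀ x : L, x ∈ J0 ↔ ((x, (0:L)) : L × L) ∈ I := fun x => Iff.rfl
  have hJ1mem : ∀ u : L, u ∈ J1 ↔ (((0:L), u) : L × L) ∈ I := fun u => Iff.rfl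
  -- L is not abelian
  obtain ⟨a, b, hab⟩ : ∃ a b : L, ⁅a, b⁆ ≠ 0 := by
    by_contra h
    push_neg at h
    exact LieAlgebra.IsSimple.non_abelian K (L := L) ⟨fun x y => h x y⟩
  rcases (LieAlgebra.IsSimple.eq_bot_or_eq_top J0) with h0 | h0
  · rcases (LieAlgebra.IsSimple.eq_bot_or_eq_top J1) with h1' | h1'
    · -- both parts trivial : I = ⊥
      left
      rw [Submodule.eq_bot_iff]
      intro z hz
      obtain ⟨hz1, hz2⟩ := hhom z hz
      have e1 : z.1 ∈ J0 := (hJ0mem z.1).mpr hz1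
      have e2 : z.2 ∈ J1 := (hJ1mem z.2).mpr hz2
      rw [h0] at e1; rw [h1'] at e2
      have : z.1 = 0 := e1
      have : z.2 = 0 := e2
      exact Prod.ext ‹z.1 = 0› ‹z.2 = 0›
    · -- J1 = ⊤ : then [v,u] ∈ J0 for all u v, contradicting J0 = ⊥
      exfalso
      have hb : b ∈ J1 := h1' ▸ trivial
      have := hbr (0, b) ((hJ1mem b).mp hb) (0, a)
      have hmem : (⁅a, b⁆ : L) ∈ J0 := by
        rw [hJ0mem]; simpa using this
      rw [h0] at hmem
      exact hab hmem
  · -- J0 = ⊤ : then [v,x] ∈ J1 for all x v, so J1 ≠ ⊥, so J1 = ⊤, so I = ⊤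
    have hJ1top : J1 = ⊤ := by
      rcases (LieAlgebra.IsSimple.eq_bot_or_eq_top J1) with h1' | h1'
      · exfalso
        have hb : b ∈ J0 := h0 ▸ trivial
        have := hbr (b, 0) ((hJ0mem b).mp hb) (0, a)
        have hmem : (⁅a, b⁆ : L) ∈ J1 := by
          rw [hJ1mem]; simpa using this
        rw [h1'] at hmem
        exact hab hmem
      · exact h1'
    right
    rw [Submodule.eq_top_iff']
    intro z
    have hz1 : ((z.1, (0:L)) : L × L) ∈ I := (hJ0mem z.1).mp (h0 ▸ trivial)
    have hz2 : (((0:L), z.2) : L × L) ∈ I := (hJ1mem z.2).mp (hJ1top ▸ trivial)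
    have := I.add_mem hz1 hz2
    simpa using this
end

section
/- Let K be a field with char K ≠ 2. Define the contact bracket on K[t, p_1,...,p_n, q_1,...,q_n] by {f,g} := (2f − E(f)) ∂g/∂t − ∂f/∂t (2g − E(g)) − Σ_i (∂f/∂p_i ∂g/∂q_i − ∂f/∂q_i ∂g/∂p_i), where E = Σ_i (p_i ∂/∂p_i + q_i ∂/∂q_i). Then with K_f := (2f − E(f)) ∂/∂t − H_f + (∂f/∂t) E one has [K_f, K_g] = K_{{f,g}} for all f, g, where [·,·] is the commutator of derivations. -/
open MvPolynomial

noncomputable section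

/-- Variables `t`, `p₁,…,pₙ`, `q₁,…,qₙ` on `K^{2n+1}`. -/
abbrev CVar (n : ℕ) := Unit ⊕ (Fin n ⊕ Fin n)

def tV {n : ℕ} : CVar n := Sum.inl ()
def pV {n : ℕ} (i : Fin n) : CVar n := Sum.inr (Sum.inl i)
def qV {n : ℕ} (i : Fin n) : CVar n := Sum.inr (Sum.inr i)

/-- The Euler field `E = Σ (pᵢ ∂/∂pᵢ + qᵢ ∂/∂qᵢ)` applied to `f`. -/
def euler {K : Type*} [CommRing K] {n : ℕ}
    (f : MvPolynomial (CVar n) K) : MvPolynomial (CVar n) K :=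
  (∑ i, X (pV i) * pderiv (pV i) f) + ∑ i, X (qV i) * pderiv (qV i) f

/-- Coefficients of the contact vector field
`K_f = (2f − E(f)) ∂/∂t − H_f + (∂f/∂t) E`. -/
def contactCoef {K : Type*} [CommRing K] {n : ℕ}
    (f : MvPolynomial (CVar n) K) : CVar n → MvPolynomial (CVar n) K
  | Sum.inl _ => 2 * f - euler f
  | Sum.inr (Sum.inl i) => pderiv (qV i) f + pderiv tV f * X (pV i)
  | Sum.inr (Sum.inr i) => -(pderiv (pV i) f) + pderiv tV f * X (qV i)

/-- The contact bracket
`{f,g} = (2f − E(f)) ∂g/∂t − ∂f/∂t (2g − E(g)) − Σᵢ (∂f/∂pᵢ ∂g/∂qᵢ − ∂f/∂qᵢ ∂g/∂pᵢ)`. -/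
def contactBracket {K : Type*} [CommRing K] {n : ℕ}
    (f g : MvPolynomial (CVar n) K) : MvPolynomial (CVar n) K :=
  (2 * f - euler f) * pderiv tV g - pderiv tV f * (2 * g - euler g) -
    ∑ i, (pderiv (pV i) f * pderiv (qV i) g - pderiv (qV i) f * pderiv (pV i) g)

set_option linter.unreachableTactic false
set_option linter.unusedTactic false

namespace ContactAux

theorem pderiv_comm' {R σ : Type*} [CommSemiring R] (i j : σ) (f : MvPolynomial σ R) :
    pderiv i (pderiv j f) = pderiv j (pderiv i f) := by
  classical
  induction f using MvPolynomial.induction_on with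
  | C a => simp
  | add p q hp hq => simp [hp, hq]
  | mul_X p k ih =>
    simp only [pderiv_mul, map_add, pderiv_X, ih, Pi.single_apply]
    split_ifs <;> simp_all

variable {K : Type*} [CommRing K] {n : ℕ}

local notation "R" => MvPolynomial (CVar n) K

@[simp] lemma inl_eq_tV (x : Unit) : (Sum.inl x : CVar n) = tV := rfl
@[simp] lemma inr_inl_eq_pV (i : Fin n) : (Sum.inr (Sum.inl i) : CVar n) = pV i := rfl
@[simp] lemma inr_inr_eq_qV (i : Fin n) : (Sum.inr (Sum.inr i) : CVar n) = qV i := rfl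

@[simp] lemma coef_t (f : R) : contactCoef f tV = 2 * f - euler f := rfl
@[simp] lemma coef_p (f : R) (i : Fin n) :
    contactCoef f (pV i) = pderiv (qV i) f + pderiv tV f * X (pV i) := rfl
@[simp] lemma coef_q (f : R) (i : Fin n) :
    contactCoef f (qV i) = -(pderiv (pV i) f) + pderiv tV f * X (qV i) := rfl

@[simp] lemma pdXtt : pderiv tV (X tV : R) = 1 := pderiv_X_self _
@[simp] lemma pdXtp (i : Fin n) : pderiv (pV i) (X tV : R) = 0 :=
  pderiv_X_of_ne (fun h => Sum.inl_ne_inr h)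
@[simp] lemma pdXtq (i : Fin n) : pderiv (qV i) (X tV : R) = 0 :=
  pderiv_X_of_ne (fun h => Sum.inl_ne_inr h)
@[simp] lemma pdXpt (i : Fin n) : pderiv tV (X (pV i) : R) = 0 :=
  pderiv_X_of_ne (fun h => Sum.inr_ne_inl h)
@[simp] lemma pdXqt (i : Fin n) : pderiv tV (X (qV i) : R) = 0 :=
  pderiv_X_of_ne (fun h => Sum.inr_ne_inl h)
@[simp] lemma pdXpq (i j : Fin n) : pderiv (qV j) (X (pV i) : R) = 0 :=
  pderiv_X_of_ne (fun h => Sum.inl_ne_inr (Sum.inr_injective (α := Unit) h))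
@[simp] lemma pdXqp (i j : Fin n) : pderiv (pV j) (X (qV i) : R) = 0 :=
  pderiv_X_of_ne (fun h => Sum.inr_ne_inl (Sum.inr_injective (α := Unit) h))
@[simp] lemma pdXpp (i j : Fin n) :
    pderiv (pV i) (X (pV j) : R) = if j = i then 1 else 0 := by
  classical
  rcases eq_or_ne j i with h | h
  · subst h; simp [pderiv_X_self]
  · rw [pderiv_X_of_ne (show pV j ≠ pV i from fun hh => h (Sum.inl_injective (Sum.inr_injective hh)))]; simp [h]
@[simp] lemma pdXqq (i j : Fin n) :
    pderiv (qV i) (X (qV j) : R) = if j = i then 1 else 0 := by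
  classical
  rcases eq_or_ne j i with h | h
  · subst h; simp [pderiv_X_self]
  · rw [pderiv_X_of_ne (show qV j ≠ qV i from fun hh => h (Sum.inr_injective (Sum.inr_injective hh)))]; simp [h]

@[simp] lemma pderiv_two (w : CVar n) : pderiv w (2 : R) = 0 := by
  rw [show (2 : R) = C (2 : K) from (map_ofNat C 2).symm, pderiv_C]

/-- The contact vector field of `f` applied to `h`. -/
def Dop (f h : R) : R := ∑ w, contactCoef f w * pderiv w h

lemma Dop_expand (f h : R) :
    Dop f h = (2 * f - euler f) * pderiv tV h
      + (∑ i, (pderiv (qV i) f + pderiv tV f * X (pV i)) * pderiv (pV i) h)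
      + ∑ i, (-(pderiv (pV i) f) + pderiv tV f * X (qV i)) * pderiv (qV i) h := by
  simp [Dop, Fintype.sum_sum_type, add_assoc]


/-- opaque sum wrapper -/
def osum (F : Fin n → MvPolynomial (CVar n) K) : MvPolynomial (CVar n) K := ∑ x, F x

lemma sum_eq_osum (F : Fin n → MvPolynomial (CVar n) K) :
    Finset.sum Finset.univ F = osum F := rfl

lemma osum_two (F : Fin n → MvPolynomial (CVar n) K) :
    osum (fun x => 2 * F x) = 2 * osum F := by
  simp [osum, Finset.mul_sum]

lemma osum_osum_comm (A B : Fin n → Fin n → MvPolynomial (CVar n) K)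
    (h : ∀ a b, A a b = B b a) :
    osum (fun x => osum (fun y => A x y)) = osum (fun x => osum (fun y => B x y)) := by
  simp only [osum]
  rw [Finset.sum_comm]
  exact Finset.sum_congr rfl fun b _ => Finset.sum_congr rfl fun a _ => h a b

set_option maxHeartbeats 2000000 in
lemma case_p (f g : R) (j : Fin n) :
    Dop f (contactCoef g (pV j)) - Dop g (contactCoef f (pV j)) =
      contactCoef (contactBracket f g) (pV j) := by
  simp only [coef_p, coef_t, coef_q, Dop_expand, contactBracket, euler, map_add, map_sub,
    map_neg, map_sum, pderiv_mul, pderiv_two, pdXtt, pdXtp, pdXtq, pdXpt, pdXqt, pdXpq,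
    pdXqp, pdXpp, pdXqq, mul_ite, ite_mul, mul_one, mul_zero, one_mul, zero_mul, add_zero,
    zero_add, mul_add, add_mul, sub_mul, mul_sub, neg_mul, mul_neg, neg_neg, neg_add,
    Finset.sum_ite_eq, Finset.sum_ite_eq', Finset.mem_univ, if_true,
    Finset.sum_add_distrib, Finset.sum_sub_distrib, Finset.mul_sum, Finset.sum_mul,
    Finset.sum_neg_distrib]
  simp only [pderiv_comm']
  simp only [mul_comm, mul_left_comm, mul_assoc]
  simp only [sum_eq_osum]
  ring


set_option maxHeartbeats 2000000 in
lemma case_q (f g : R) (j : Fin n) :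
    Dop f (contactCoef g (qV j)) - Dop g (contactCoef f (qV j)) =
      contactCoef (contactBracket f g) (qV j) := by
  simp only [coef_p, coef_t, coef_q, Dop_expand, contactBracket, euler, map_add, map_sub,
    map_neg, map_sum, pderiv_mul, pderiv_two, pdXtt, pdXtp, pdXtq, pdXpt, pdXqt, pdXpq,
    pdXqp, pdXpp, pdXqq, mul_ite, ite_mul, mul_one, mul_zero, one_mul, zero_mul, add_zero,
    zero_add, mul_add, add_mul, sub_mul, mul_sub, neg_mul, mul_neg, neg_neg, neg_add,
    Finset.sum_ite_eq, Finset.sum_ite_eq', Finset.mem_univ, if_true,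
    Finset.sum_add_distrib, Finset.sum_sub_distrib, Finset.mul_sum, Finset.sum_mul,
    Finset.sum_neg_distrib]
  simp only [pderiv_comm']
  simp only [mul_comm, mul_left_comm, mul_assoc]
  simp only [sum_eq_osum]
  ring


set_option maxHeartbeats 2000000 in
lemma case_t (f g : R) :
    Dop f (contactCoef g tV) - Dop g (contactCoef f tV) =
      contactCoef (contactBracket f g) tV := by
  simp only [coef_p, coef_t, coef_q, Dop_expand, contactBracket, euler, map_add, map_sub,
    map_neg, map_sum, pderiv_mul, pderiv_two, pdXtt, pdXtp, pdXtq, pdXpt, pdXqt, pdXpq,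
    pdXqp, pdXpp, pdXqq, mul_ite, ite_mul, mul_one, mul_zero, one_mul, zero_mul, add_zero,
    zero_add, mul_add, add_mul, sub_mul, mul_sub, neg_mul, mul_neg, neg_neg, neg_add,
    Finset.sum_ite_eq, Finset.sum_ite_eq', Finset.mem_univ, if_true,
    Finset.sum_add_distrib, Finset.sum_sub_distrib, Finset.mul_sum, Finset.sum_mul,
    Finset.sum_neg_distrib]
  simp only [pderiv_comm']
  simp only [mul_comm, mul_left_comm, mul_assoc]
  simp only [sum_eq_osum]
  simp only [osum_two]
  have hh0 : (osum fun x => ContactAux.osum fun x_1 => MvPolynomial.X (pV x_1) * ((MvPolynomial.pderiv (pV x)) ((MvPolynomial.pderiv (pV x_1)) f) * (MvPolynomial.pderiv (qV x)) g)) = (osum fun x => ContactAux.osum fun i => MvPolynomial.X (pV x) * ((MvPolynomial.pderiv (pV x)) ((MvPolynomial.pderiv (pV i)) f) * (MvPolynomial.pderiv (qV i)) g)) := osum_osum_comm _ _ (fun a b => by first | ring1 | (rw [pderiv_comm' (pV a) (pV b) f]; try ring1))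
  have hh1 : (osum fun x => ContactAux.osum fun x_1 => MvPolynomial.X (pV x_1) * ((MvPolynomial.pderiv (pV x)) ((MvPolynomial.pderiv (pV x_1)) g) * (MvPolynomial.pderiv (qV x)) f)) = (osum fun x => ContactAux.osum fun x_1 => MvPolynomial.X (pV x) * ((MvPolynomial.pderiv (pV x)) ((MvPolynomial.pderiv (pV x_1)) g) * (MvPolynomial.pderiv (qV x_1)) f)) := osum_osum_comm _ _ (fun a b => by first | ring1 | (rw [pderiv_comm' (pV a) (pV b) g]; try ring1))
  have hh2 : (osum fun x => ContactAux.osum fun x_1 => MvPolynomial.X (pV x_1) * ((MvPolynomial.pderiv (pV x)) f * (MvPolynomial.pderiv (pV x_1)) ((MvPolynomial.pderiv (qV x)) g))) = (osum fun x => ContactAux.osum fun i => MvPolynomial.X (pV x) * ((MvPolynomial.pderiv (pV i)) f * (MvPolynomial.pderiv (pV x)) ((MvPolynomial.pderiv (qV i)) g))) := osum_osum_comm _ _ (fun a b => by first | ring1 | (rw [pderiv_comm' (pV b) (qV a) g]; try ring1))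
  have hh3 : (osum fun x => ContactAux.osum fun x_1 => MvPolynomial.X (pV x_1) * ((MvPolynomial.pderiv (pV x)) g * (MvPolynomial.pderiv (pV x_1)) ((MvPolynomial.pderiv (qV x)) f))) = (osum fun x => ContactAux.osum fun x_1 => MvPolynomial.X (pV x) * ((MvPolynomial.pderiv (pV x_1)) g * (MvPolynomial.pderiv (pV x)) ((MvPolynomial.pderiv (qV x_1)) f))) := osum_osum_comm _ _ (fun a b => by first | ring1 | (rw [pderiv_comm' (pV b) (qV a) f]; try ring1))
  have hh4 : (osum fun x => ContactAux.osum fun x_1 => MvPolynomial.X (qV x_1) * ((MvPolynomial.pderiv (pV x)) f * (MvPolynomial.pderiv (qV x)) ((MvPolynomial.pderiv (qV x_1)) g))) = (osum fun x => ContactAux.osum fun i => MvPolynomial.X (qV x) * ((MvPolynomial.pderiv (pV i)) f * (MvPolynomial.pderiv (qV x)) ((MvPolynomial.pderiv (qV i)) g))) := osum_osum_comm _ _ (fun a b => by first | ring1 | (rw [pderiv_comm' (qV a) (qV b) g]; try ring1))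
  have hh5 : (osum fun x => ContactAux.osum fun x_1 => MvPolynomial.X (qV x_1) * ((MvPolynomial.pderiv (pV x)) g * (MvPolynomial.pderiv (qV x)) ((MvPolynomial.pderiv (qV x_1)) f))) = (osum fun x => ContactAux.osum fun x_1 => MvPolynomial.X (qV x) * ((MvPolynomial.pderiv (pV x_1)) g * (MvPolynomial.pderiv (qV x)) ((MvPolynomial.pderiv (qV x_1)) f))) := osum_osum_comm _ _ (fun a b => by first | ring1 | (rw [pderiv_comm' (qV a) (qV b) f]; try ring1))
  have hh6 : (osum fun x => ContactAux.osum fun x_1 => MvPolynomial.X (qV x_1) * ((MvPolynomial.pderiv (qV x)) f * (MvPolynomial.pderiv (pV x)) ((MvPolynomial.pderiv (qV x_1)) g))) = (osum fun x => ContactAux.osum fun x_1 => MvPolynomial.X (qV x) * ((MvPolynomial.pderiv (pV x_1)) ((MvPolynomial.pderiv (qV x)) g) * (MvPolynomial.pderiv (qV x_1)) f)) := osum_osum_comm _ _ (fun a b => by first | ring1 | (rw [pderiv_comm' (pV a) (qV b) g]; try ring1))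
  have hh7 : (osum fun x => ContactAux.osum fun x_1 => MvPolynomial.X (qV x_1) * ((MvPolynomial.pderiv (qV x)) g * (MvPolynomial.pderiv (pV x)) ((MvPolynomial.pderiv (qV x_1)) f))) = (osum fun x => ContactAux.osum fun x_1 => MvPolynomial.X (qV x) * ((MvPolynomial.pderiv (pV x_1)) ((MvPolynomial.pderiv (qV x)) f) * (MvPolynomial.pderiv (qV x_1)) g)) := osum_osum_comm _ _ (fun a b => by first | ring1 | (rw [pderiv_comm' (pV a) (qV b) f]; try ring1))
  simp only [hh0, hh1, hh2, hh3, hh4, hh5, hh6, hh7]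
  ring


end ContactAux

/-- `[K_f, K_g] = K_{{f,g}}` as an identity of coefficients of vector fields. -/
theorem contact_fields_commutator
    {K : Type*} [Field K] (h2 : (2 : K) ≠ 0) {n : ℕ}
    (f g : MvPolynomial (CVar n) K) (v : CVar n) :
    (∑ w, contactCoef f w * pderiv w (contactCoef g v)) -
        (∑ w, contactCoef g w * pderiv w (contactCoef f v)) =
      contactCoef (contactBracket f g) v := by
  rcases v with u | i | i
  · cases u; exact ContactAux.case_t f g
  · exact ContactAux.case_p f g i
  · exact ContactAux.case_q f g i

end
end

section
/- Let A be a Lie algebra carrying two Z-gradings, A = ⊕_j g_j and A = ⊕_i h_i, which are compatible in the sense that h_i = ⊕_j (h_i ∩ g_j) for all i. Assume: (a) the grading h is transitive, i.e. for every i ≥ 0 and every nonzero X ∈ h_i there exists Y ∈ h_{−1} with [X,Y] ≠ 0; (b) h_{−1} is an irreducible h_0-module under the adjoint action; (c) h_0 ∩ g_− = 0, where g_− = ⊕_{j<0} g_j. Then h_{−1} is homogeneous with respect to the g-grading, i.e. h_{−1} ⊆ g_{j_0} for some j_0, and h_0 ⊆ g_0. -/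
/-- Lemma "when `h₋₁` is homogeneous": for two compatible `ℤ`-gradings `g`, `h` of a Lie
algebra `A`, with `h` transitive, `h₋₁` an irreducible `h₀`-module, and `h₀ ∩ g₋ = 0`,
the component `h₋₁` is homogeneous with respect to the `g`-grading and `h₀ ⊆ g₀`. -/
theorem weisfeiler_h_neg_one_homogeneous
    {K : Type*} [Field K] {A : Type*} [LieRing A] [LieAlgebra K A]
    (g h : ℤ → Submodule K A)
    (hg : DirectSum.IsInternal g) (hh : DirectSum.IsInternal h)
    (hgbr : ∀ i j : ℤ, ∀ x ∈ g i, ∀ y ∈ g j, ⁅x, y⁆ ∈ g (i + j))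
    (hhbr : ∀ i j : ℤ, ∀ x ∈ h i, ∀ y ∈ h j, ⁅x, y⁆ ∈ h (i + j))
    -- compatibility: hᵢ = ⊕ⱼ (hᵢ ∩ gⱼ)
    (hcompat : ∀ i : ℤ, h i = ⨆ j : ℤ, (h i ⊓ g j))
    -- (a) transitivity of the h-grading
    (htrans : ∀ i : ℤ, 0 ≤ i → ∀ x ∈ h i, x ≠ 0 → ∃ y ∈ h (-1), ⁅x, y⁆ ≠ 0)
    -- (b) h₋₁ is an irreducible h₀-module
    (hne : h (-1) ≠ ⊥)
    (hirr : ∀ W : Submodule K A, W ≤ h (-1) →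
      (∀ a ∈ h 0, ∀ w ∈ W, ⁅a, w⁆ ∈ W) → W = ⊥ ∨ W = h (-1))
    -- (c) h₀ ∩ g₋ = 0
    (hzero : h 0 ⊓ (⨆ j < (0 : ℤ), g j) = ⊥) :
    (∃ j0 : ℤ, h (-1) ≤ g j0) ∧ h 0 ≤ g 0 := by
  classical
  have hgind := hg.submodule_iSupIndep
  have hgdisj : ∀ {m k : ℤ}, m ≠ k → g m ⊓ g k = ⊥ := fun {m k} hmk =>
    disjoint_iff.mp (hgind.pairwiseDisjoint hmk)
  -- the bigraded pieces of h₀ with negative g-degree vanish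
  have hneg : ∀ m : ℤ, m < 0 → h 0 ⊓ g m = ⊥ := by
    intro m hm
    have h1 : h 0 ⊓ g m ≤ h 0 ⊓ (⨆ j < (0 : ℤ), g j) :=
      inf_le_inf_left _ ((le_iSup₂ (f := fun j (_ : j < (0:ℤ)) => g j) m hm))
    rw [hzero] at h1
    exact le_bot_iff.mp h1
  -- the filtration W j = ⨆_{k > j} (h₋₁ ∩ g_k)
  set W : ℤ → Submodule K A := fun j => ⨆ k : {k : ℤ // j < k}, (h (-1) ⊓ g (k : ℤ)) with hW
  have hpiece : ∀ k j : ℤ, j < k → h (-1) ⊓ g k ≤ W j := fun k j hk =>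
    le_iSup (fun k : {k : ℤ // j < k} => h (-1) ⊓ g (k : ℤ)) ⟨k, hk⟩
  have hWle : ∀ j : ℤ, W j ≤ h (-1) := fun j => iSup_le fun k => inf_le_left
  have hWanti : ∀ j j' : ℤ, j ≤ j' → W j' ≤ W j := by
    intro j j' hjj'
    exact iSup_le fun k => hpiece k j (by omega)
  -- each W j is an h₀-submodule
  have hWinv : ∀ j : ℤ, ∀ a ∈ h 0, ∀ w ∈ W j, ⁅a, w⁆ ∈ W j := by
    intro j a ha
    rw [hcompat 0] at ha
    refine Submodule.iSup_induction (motive := fun a => ∀ w ∈ W j, ⁅a, w⁆ ∈ W j) _ ha ?_ ?_ ?_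
    · intro m a ham
      rcases lt_or_ge m 0 with hm | hm
      · have : a = 0 := by
          have := hneg m hm ▸ ham
          simpa using this
        intro w hw
        simp [this]
      · intro w hw
        refine Submodule.iSup_induction (motive := fun w => ⁅a, w⁆ ∈ W j) _ hw ?_ ?_ ?_
        · rintro ⟨k, hk⟩ w hwk
          have h1 : ⁅a, w⁆ ∈ h (-1) := by
            have := hhbr 0 (-1) a ham.1 w hwk.1
            simpa using this
          have h2 : ⁅a, w⁆ ∈ g (m + k) := hgbr m k a ham.2 w hwk.2
          exact hpiece (m + k) j (by omega) ⟨h1, h2⟩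
        · simp
        · intro x y hx hy
          rw [lie_add]
          exact add_mem hx hy
    · intro w hw
      simp
    · intro x y hx hy w hw
      rw [add_lie]
      exact add_mem (hx w hw) (hy w hw)
  have hWor : ∀ j : ℤ, W j = ⊥ ∨ W j = h (-1) := fun j =>
    hirr (W j) (hWle j) (hWinv j)
  -- g m ⊓ W j = ⊥ when m ≤ j
  have hgW : ∀ m j : ℤ, m ≤ j → g m ⊓ W j = ⊥ := by
    intro m j hmj
    have h1 : W j ≤ ⨆ k, ⨆ _ : k ≠ m, g k := by
      refine iSup_le ?_
      rintro ⟨k, hk⟩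
      exact inf_le_right.trans (le_iSup₂ (f := fun k (_ : k ≠ m) => g k) k (by omega))
    exact disjoint_iff.mp ((hgind m).mono_right h1)
  -- there is some j with W j = ⊥
  have hbot : ∃ j : ℤ, W j = ⊥ := by
    by_contra hcon
    push_neg at hcon
    have hall : ∀ j, W j = h (-1) := fun j => (hWor j).resolve_left (hcon j)
    apply hne
    rw [hcompat (-1)]
    refine le_bot_iff.mp (iSup_le fun m => ?_)
    have : h (-1) ⊓ g m ≤ g m ⊓ W m := by
      refine le_inf inf_le_right ?_
      rw [hall m]
      exact inf_le_left
    rw [hgW m m le_rfl] at this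
    exact this
  -- there is some j with W j ≠ ⊥
  have htop : ∃ j : ℤ, W j ≠ ⊥ := by
    by_contra hcon
    push_neg at hcon
    apply hne
    rw [hcompat (-1)]
    refine le_bot_iff.mp (iSup_le fun m => ?_)
    have := hpiece m (m - 1) (by omega)
    rw [hcon (m - 1)] at this
    exact this
  obtain ⟨j1, hj1⟩ := htop
  -- least j with W j = ⊥
  obtain ⟨j0, hj0bot, hj0min⟩ := Int.exists_least_of_bdd (P := fun j => W j = ⊥)
    ⟨j1 + 1, by
      intro z hz
      by_contra hc
      exact hj1 (le_bot_iff.mp (hz ▸ hWanti z j1 (by omega)))⟩ hbot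
  have hj0prev : W (j0 - 1) = h (-1) := by
    refine (hWor (j0 - 1)).resolve_left ?_
    intro hc
    have := hj0min (j0 - 1) hc
    omega
  -- h₋₁ = h₋₁ ∩ g j0
  have hhom : h (-1) ≤ g j0 := by
    have h1 : W (j0 - 1) ≤ (h (-1) ⊓ g j0) ⊔ W j0 := by
      refine iSup_le ?_
      rintro ⟨k, hk⟩
      rcases eq_or_ne k j0 with rfl | hne'
      · exact le_sup_left
      · exact (hpiece k j0 (by omega)).trans le_sup_right
    rw [hj0bot, sup_bot_eq, hj0prev] at h1
    exact h1.trans inf_le_right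
  refine ⟨⟨j0, hhom⟩, ?_⟩
  -- h₀ ⊆ g₀
  rw [hcompat 0]
  refine iSup_le fun m => ?_
  rcases lt_trichotomy m 0 with hm | rfl | hm
  · rw [hneg m hm]; exact bot_le
  · exact inf_le_right
  · have : h 0 ⊓ g m = ⊥ := by
      rw [eq_bot_iff]
      intro x hx
      simp only [Submodule.mem_bot]
      by_contra hx0
      obtain ⟨y, hy, hxy⟩ := htrans 0 le_rfl x hx.1 hx0
      have h1 : ⁅x, y⁆ ∈ h (-1) := by
        have := hhbr 0 (-1) x hx.1 y hy
        simpa using this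
      have h2 : ⁅x, y⁆ ∈ g j0 ⊓ g (m + j0) := ⟨hhom h1, hgbr m j0 x hx.2 y (hhom hy)⟩
      rw [hgdisj (show j0 ≠ m + j0 by omega)] at h2
      exact hxy (by simpa using h2)
    rw [this]; exact bot_le
end
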